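/- arXiv:1806.05018 — 3 statements merged into one kernel-verified Lean document; each statement's English description precedes it below -/
import Mathlib

section
/- Let α > 0 and let f : ℝ^d → ℝ be continuously differentiable, bounded, with bounded gradient. Then for every t ≥ 0 and x ∈ ℝ^d, the Cole–Hopf function V_t f := −α ln(P^α_t e^{−f/α}) satisfies the gradient estimate ‖∇(V_t f)(x)‖² ≤ exp((2/α)(sup f − inf f)) · sup_{y∈ℝ^d} ‖∇f(y)‖². -/
open MeasureTheory ProbabilityTheory Filter Set
open scoped ENNReal NNReal

set_option maxHeartbeats 1000000
noncomputable section

/-- Standard Gaussian measure on `ℝ^d`. -/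
def stdGaussian (d : ℕ) : Measure (EuclideanSpace ℝ (Fin d)) :=
  (Measure.pi fun _ : Fin d => gaussianReal 0 1).map
    (MeasurableEquiv.toLp 2 (Fin d → ℝ))

/-- Heat semigroup `(P^α_t g)(x) = ∫ g(x + √(αt) z) γ_d(dz)` with generator `(α/2)Δ`. -/
def heat (d : ℕ) (α t : ℝ) (g : EuclideanSpace ℝ (Fin d) → ℝ)
    (x : EuclideanSpace ℝ (Fin d)) : ℝ :=
  ∫ z, g (x + Real.sqrt (α * t) • z) ∂(stdGaussian d)

/-- Cole–Hopf solution `V_t f = -α ln (P^α_t e^{-f/α})`. -/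
def coleHopf (d : ℕ) (α t : ℝ) (f : EuclideanSpace ℝ (Fin d) → ℝ)
    (x : EuclideanSpace ℝ (Fin d)) : ℝ :=
  -α * Real.log (heat d α t (fun y => Real.exp (-f y / α)) x)

lemma stdGaussian_isProb (d : ℕ) : IsProbabilityMeasure (stdGaussian d) :=
  Measure.isProbabilityMeasure_map (MeasurableEquiv.toLp 2 (Fin d → ℝ)).measurable.aemeasurable

lemma norm_gradient_eq_norm_fderiv {d : ℕ} (g : EuclideanSpace ℝ (Fin d) → ℝ)
    (x : EuclideanSpace ℝ (Fin d)) : ‖gradient g x‖ = ‖fderiv ℝ g x‖ := by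
  rw [gradient]; exact (InnerProductSpace.toDual ℝ _).symm.norm_map _

/-- **Gradient estimate for the Cole–Hopf solution**: for `f` bounded `C¹` with bounded
gradient, `‖∇(V_t f)(x)‖² ≤ exp((2/α)(sup f − inf f)) ⬝ sup_y ‖∇f(y)‖²` for all `t ≥ 0`
and `x ∈ ℝ^d`, where `V_t f = −α ln(P^α_t e^{−f/α})`. -/
theorem coleHopf_gradient_estimate
    {d : ℕ} (hd : 1 ≤ d) {α : ℝ} (hα : 0 < α)
    (f : EuclideanSpace ℝ (Fin d) → ℝ) (hf : ContDiff ℝ 1 f)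
    (hfa : BddAbove (Set.range f)) (hfb : BddBelow (Set.range f))
    (hgb : ∃ C, ∀ x, ‖gradient f x‖ ≤ C)
    {t : ℝ} (ht : 0 ≤ t) (x : EuclideanSpace ℝ (Fin d)) :
    ‖gradient (coleHopf d α t f) x‖ ^ 2
      ≤ Real.exp ((2 / α) * ((⨆ y, f y) - ⨅ y, f y)) * ⨆ y, ‖gradient f y‖ ^ 2 := by
  haveI := stdGaussian_isProb d
  obtain ⟨C, hC⟩ := hgb
  -- basic bounds on f
  set A : ℝ := ⨅ y, f y with hA
  set B : ℝ := ⨆ y, f y with hB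
  have hAle : ∀ y, A ≤ f y := fun y => ciInf_le hfb y
  have hleB : ∀ y, f y ≤ B := fun y => le_ciSup hfa y
  -- the sup of gradient norms
  have hbddM : BddAbove (Set.range fun y => ‖gradient f y‖) := by
    refine ⟨C, ?_⟩; rintro _ ⟨y, rfl⟩; exact hC y
  set M : ℝ := ⨆ y, ‖gradient f y‖ with hM
  have hfM : ∀ y, ‖gradient f y‖ ≤ M := fun y => le_ciSup hbddM y
  have hM0 : 0 ≤ M := le_trans (norm_nonneg _) (hfM 0)
  -- f is M-Lipschitz
  have hlipf : ∀ a b : EuclideanSpace ℝ (Fin d), ‖f a - f b‖ ≤ M * ‖a - b‖ := fun a b =>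
    Convex.norm_image_sub_le_of_norm_fderiv_le
      (fun y _ => (hf.differentiable one_ne_zero) y)
      (fun y _ => by rw [← norm_gradient_eq_norm_fderiv]; exact hfM y)
      convex_univ trivial trivial
  set s : ℝ := Real.sqrt (α * t)
  set P : EuclideanSpace ℝ (Fin d) → ℝ := heat d α t (fun y => Real.exp (-f y / α)) with hP
  -- integrability
  have hint : ∀ a : EuclideanSpace ℝ (Fin d), Integrable (fun z : EuclideanSpace ℝ (Fin d) => Real.exp (-f (a + s • z) / α))
      (stdGaussian d) := by
    intro a
    refine Integrable.mono' (integrable_const (Real.exp (-A / α))) ?_ (ae_of_all _ fun z => ?_)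
    · have hfc : Continuous f := hf.continuous
      have hcz : Continuous (fun z : EuclideanSpace ℝ (Fin d) => Real.exp (-f (a + s • z) / α)) := by
        fun_prop
      exact hcz.aestronglyMeasurable
    · rw [Real.norm_eq_abs, abs_of_pos (Real.exp_pos _)]
      apply Real.exp_le_exp.2
      gcongr
      exact hAle _
  -- positivity of P
  have hPpos : ∀ a : EuclideanSpace ℝ (Fin d), 0 < P a := by
    intro a
    have h1 : Real.exp (-B / α) ≤ P a := by
      have := integral_mono (integrable_const (Real.exp (-B / α))) (hint a)
        (fun z => by apply Real.exp_le_exp.2; gcongr; exact hleB _)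
      simpa [hP, heat] using this
    exact lt_of_lt_of_le (Real.exp_pos _) h1
  -- the key comparison giving Lipschitz estimate for coleHopf
  have key : ∀ a b : EuclideanSpace ℝ (Fin d), coleHopf d α t f a - coleHopf d α t f b ≤ M * ‖a - b‖ := by
    intro a b
    have hcomp : P b ≤ Real.exp (M * ‖a - b‖ / α) * P a := by
      have hpt : ∀ z : EuclideanSpace ℝ (Fin d), Real.exp (-f (b + s • z) / α)
          ≤ Real.exp (M * ‖a - b‖ / α) * Real.exp (-f (a + s • z) / α) := by
        intro z
        rw [← Real.exp_add]
        apply Real.exp_le_exp.2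
        rw [← add_div, div_le_div_iff_of_pos_right hα]
        have h := hlipf (a + s • z) (b + s • z)
        rw [show (a + s • z) - (b + s • z) = a - b by abel, Real.norm_eq_abs] at h
        have h2 := (abs_le.1 h).2
        linarith
      have : (∫ z, Real.exp (-f (b + s • z) / α) ∂(stdGaussian d))
          ≤ ∫ z, Real.exp (M * ‖a - b‖ / α) * Real.exp (-f (a + s • z) / α) ∂(stdGaussian d) :=
        integral_mono (hint b) ((hint a).const_mul _) hpt
      simpa [hP, heat, integral_const_mul] using this
    have hlog : Real.log (P b) ≤ M * ‖a - b‖ / α + Real.log (P a) := by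
      calc Real.log (P b) ≤ Real.log (Real.exp (M * ‖a - b‖ / α) * P a) :=
            Real.log_le_log (hPpos b) hcomp
        _ = M * ‖a - b‖ / α + Real.log (P a) := by
            rw [Real.log_mul (Real.exp_ne_zero _) (ne_of_gt (hPpos a)), Real.log_exp]
    have : coleHopf d α t f a - coleHopf d α t f b = α * (Real.log (P b) - Real.log (P a)) := by
      simp [coleHopf, hP]; ring
    rw [this]
    have : Real.log (P b) - Real.log (P a) ≤ M * ‖a - b‖ / α := by linarith
    calc α * (Real.log (P b) - Real.log (P a)) ≤ α * (M * ‖a - b‖ / α) := by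
          exact mul_le_mul_of_nonneg_left this (le_of_lt hα)
      _ = M * ‖a - b‖ := by field_simp
  -- Lipschitz bound on the gradient
  have hlipV : LipschitzWith M.toNNReal (coleHopf d α t f) := by
    rw [lipschitzWith_iff_dist_le_mul]
    intro a b
    rw [Real.dist_eq, Real.coe_toNNReal _ hM0, dist_eq_norm]
    rw [abs_sub_le_iff]
    constructor
    · exact key a b
    · rw [norm_sub_rev]; exact key b a
  have hgrad : ‖gradient (coleHopf d α t f) x‖ ≤ M := by
    rw [norm_gradient_eq_norm_fderiv]
    have := norm_fderiv_le_of_lipschitz ℝ hlipV (x₀ := x)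
    rwa [Real.coe_toNNReal _ hM0] at this
  -- conclude
  have hbddS : BddAbove (Set.range fun y => ‖gradient f y‖ ^ 2) := by
    refine ⟨(max C 0) ^ 2, ?_⟩; rintro _ ⟨y, rfl⟩
    exact pow_le_pow_left₀ (norm_nonneg _) (le_trans (hC y) (le_max_left _ _)) 2
  set S : ℝ := ⨆ y, ‖gradient f y‖ ^ 2 with hS
  have hS0 : 0 ≤ S := le_trans (sq_nonneg _) (le_ciSup hbddS 0)
  have hMS : M ^ 2 ≤ S := by
    have hMle : M ≤ Real.sqrt S := by
      apply ciSup_le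
      intro y
      rw [← Real.sqrt_sq (norm_nonneg (gradient f y))]
      exact Real.sqrt_le_sqrt (le_ciSup hbddS y)
    calc M ^ 2 ≤ Real.sqrt S ^ 2 := pow_le_pow_left₀ hM0 hMle 2
      _ = S := Real.sq_sqrt hS0
  have hexp : 1 ≤ Real.exp ((2 / α) * (B - A)) := by
    apply Real.one_le_exp
    apply mul_nonneg (by positivity)
    linarith [hAle 0, hleB 0]
  calc ‖gradient (coleHopf d α t f) x‖ ^ 2 ≤ M ^ 2 :=
        pow_le_pow_left₀ (norm_nonneg _) hgrad 2
    _ ≤ S := hMS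
    _ ≤ Real.exp ((2 / α) * (B - A)) * S := le_mul_of_one_le_left hS0 hexp
    _ = Real.exp ((2 / α) * ((⨆ y, f y) - ⨅ y, f y)) * ⨆ y, ‖gradient f y‖ ^ 2 := rfl

end
end

section
/- Let X be a nonnegative real-valued random variable such that for each n ∈ ℕ₀ = {0,1,2,…} there is a real sequence (p_k)_{k∈ℕ₀} with E[s^X] = ∑_{k=0}^n p_k s^k + o(s^n) as s → 0+. Then X takes values in ℕ₀ almost surely, each p_k is nonnegative, and P(X = k) = p_k for every k ∈ ℕ₀. -/
/-!
Split `E[s^X] = ∑_{k<n} P(X = k) s^k + ∫_{X ∉ {0,…,n-1}} s^X` and induct on `n`. If `X ≥ n`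
a.s. off `{0,…,n-1}`, dominated convergence gives `s^{-n} ∫_{X ∉ {0,…,n-1}} s^X → P(X = n)`,
and the `n`-th expansion says the same ratio tends to `p_n`. The `(n+1)`-st expansion then makes
`∫_{X ∉ {0,…,n}} s^X = O(s^{n+1})`, so the Markov bound `P(X ≤ t, X ∉ {0,…,n}) ≤ s^{-t} O(s^{n+1})`
with `t < n + 1` shows that `X ≥ n + 1` a.s. off `{0,…,n}`.
-/

open MeasureTheory Filter Set
open scoped Topology

section RpowIntegral

variable {Ω : Type*} [MeasurableSpace Ω] {μ : Measure Ω} [IsFiniteMeasure μ] {Y : Ω → ℝ}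

lemma integrable_rpow_of_nonneg (hY : Measurable Y) (hY0 : ∀ᵐ ω ∂μ, 0 ≤ Y ω) {s : ℝ}
    (hs0 : 0 ≤ s) (hs1 : s ≤ 1) : Integrable (fun ω ↦ s ^ Y ω) μ := by
  refine (integrable_const 1).mono' (measurable_const.pow hY).aestronglyMeasurable ?_
  filter_upwards [hY0] with ω hω
  rw [Real.norm_of_nonneg (Real.rpow_nonneg hs0 _)]
  exact Real.rpow_le_one hs0 hs1 hω

lemma tendsto_integral_rpow_div_rpow (hY : Measurable Y) {a : ℝ} (ha : ∀ᵐ ω ∂μ, a ≤ Y ω) :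
    Tendsto (fun s : ℝ ↦ (∫ ω, s ^ Y ω ∂μ) / s ^ a) (𝓝[>] 0)
      (𝓝 (μ.real {ω | Y ω = a})) := by
  have hlim : ∫ ω, {ω | Y ω = a}.indicator 1 ω ∂μ = μ.real {ω | Y ω = a} :=
    integral_indicator_one (hY (measurableSet_singleton a))
  rw [← hlim]
  have hdct : Tendsto (fun s : ℝ ↦ ∫ ω, s ^ (Y ω - a) ∂μ) (𝓝[>] 0)
      (𝓝 (∫ ω, {ω | Y ω = a}.indicator 1 ω ∂μ)) := by
    refine tendsto_integral_filter_of_dominated_convergence (fun _ ↦ 1)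
      (Eventually.of_forall fun s ↦
        (measurable_const.pow (hY.sub_const a)).aestronglyMeasurable) ?_ (integrable_const 1) ?_
    · filter_upwards [Ioc_mem_nhdsGT one_pos] with s hs
      filter_upwards [ha] with ω hω
      rw [Real.norm_of_nonneg (Real.rpow_nonneg hs.1.le _)]
      exact Real.rpow_le_one hs.1.le hs.2 (sub_nonneg.2 hω)
    · filter_upwards [ha] with ω hω
      by_cases heq : Y ω = a
      · simp [heq]
      · simpa [heq, Real.zero_rpow (sub_ne_zero.2 heq)] using
          ((Real.continuous_rpow_const (sub_nonneg.2 hω)).tendsto 0).mono_left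
            nhdsWithin_le_nhds
  refine hdct.congr' ?_
  filter_upwards [self_mem_nhdsWithin] with s (hs : 0 < s)
  rw [← integral_div]
  simp_rw [Real.rpow_sub hs]

lemma measureReal_setOf_le_eq_zero_of_tendsto (hY : Measurable Y) (hY0 : ∀ᵐ ω ∂μ, 0 ≤ Y ω)
    {a L : ℝ} (h : Tendsto (fun s : ℝ ↦ (∫ ω, s ^ Y ω ∂μ) / s ^ a) (𝓝[>] 0) (𝓝 L))
    {t : ℝ} (ht : t < a) : μ.real {ω | Y ω ≤ t} = 0 := by
  have hbound : ∀ s ∈ Ioc (0 : ℝ) 1,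
      μ.real {ω | Y ω ≤ t} ≤ s ^ (a - t) * ((∫ ω, s ^ Y ω ∂μ) / s ^ a) := by
    rintro s ⟨hs0, hs1⟩
    have hmarkov := mul_meas_ge_le_integral_of_nonneg
      (Eventually.of_forall fun ω ↦ Real.rpow_nonneg hs0.le (Y ω))
      (integrable_rpow_of_nonneg hY hY0 hs0.le hs1) (s ^ t)
    have hsub : {ω | Y ω ≤ t} ⊆ {ω | s ^ t ≤ s ^ Y ω} := fun ω hω ↦
      Real.rpow_le_rpow_of_exponent_ge hs0 hs1 hω
    calc μ.real {ω | Y ω ≤ t} ≤ μ.real {ω | s ^ t ≤ s ^ Y ω} := measureReal_mono hsub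
      _ ≤ (∫ ω, s ^ Y ω ∂μ) / s ^ t := by
        rw [le_div_iff₀' (Real.rpow_pos_of_pos hs0 t)]; exact hmarkov
      _ = s ^ (a - t) * ((∫ ω, s ^ Y ω ∂μ) / s ^ a) := by
        rw [Real.rpow_sub hs0]; field_simp
  have hzero : Tendsto (fun s : ℝ ↦ s ^ (a - t) * ((∫ ω, s ^ Y ω ∂μ) / s ^ a))
      (𝓝[>] 0) (𝓝 0) := by
    have hpow : Tendsto (fun s : ℝ ↦ s ^ (a - t)) (𝓝[>] 0) (𝓝 0) := by
      simpa [Real.zero_rpow (sub_pos.2 ht).ne'] using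
        ((Real.continuous_rpow_const (sub_pos.2 ht).le).tendsto 0).mono_left nhdsWithin_le_nhds
    simpa using hpow.mul h
  exact le_antisymm (ge_of_tendsto hzero (eventually_of_mem (Ioc_mem_nhdsGT one_pos) hbound))
    measureReal_nonneg

lemma ae_le_of_tendsto_integral_rpow_div_rpow (hY : Measurable Y) (hY0 : ∀ᵐ ω ∂μ, 0 ≤ Y ω)
    {a L : ℝ} (h : Tendsto (fun s : ℝ ↦ (∫ ω, s ^ Y ω ∂μ) / s ^ a) (𝓝[>] 0) (𝓝 L)) :
    ∀ᵐ ω ∂μ, a ≤ Y ω := by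
  have hgt : ∀ᵐ ω ∂μ, ∀ m : ℕ, a - 1 / ((m : ℝ) + 1) < Y ω := by
    refine ae_all_iff.2 fun m ↦ ?_
    have hm : a - 1 / ((m : ℝ) + 1) < a := sub_lt_self a (by positivity)
    simpa [ae_iff] using
      (measureReal_eq_zero_iff).1 (measureReal_setOf_le_eq_zero_of_tendsto hY hY0 h hm)
  filter_upwards [hgt] with ω hω
  have hlim : Tendsto (fun m : ℕ ↦ a - 1 / ((m : ℝ) + 1)) atTop (𝓝 a) := by
    simpa using tendsto_one_div_add_atTop_nhds_zero_nat.const_sub a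
  exact le_of_tendsto' hlim fun m ↦ (hω m).le

end RpowIntegral

section Expansion

variable {Ω : Type*} {X : Ω → ℝ}

def avoidsRange (X : Ω → ℝ) (n : ℕ) : Set Ω := {ω | ∀ k < n, X ω ≠ k}

lemma avoidsRange_zero : avoidsRange X 0 = univ := by
  simp [avoidsRange]

lemma avoidsRange_succ (n : ℕ) :
    avoidsRange X (n + 1) = avoidsRange X n \ {ω | X ω = n} := by
  ext ω
  simp only [avoidsRange, Nat.forall_lt_succ_right, Set.mem_sdiff, mem_ofPred_eq]

lemma setOf_eq_subset_avoidsRange (n : ℕ) : {ω | X ω = n} ⊆ avoidsRange X n := by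
  rintro ω (hω : X ω = n) k hk
  rw [hω]
  exact_mod_cast hk.ne'

variable [MeasurableSpace Ω] {μ : Measure Ω} [IsFiniteMeasure μ]

lemma measurableSet_avoidsRange (hX : Measurable X) (n : ℕ) :
    MeasurableSet (avoidsRange X n) := by
  induction n with
  | zero => exact avoidsRange_zero ▸ .univ
  | succ n ih => exact avoidsRange_succ n ▸ ih.diff (hX (measurableSet_singleton _))

lemma integral_rpow_eq_sum_add_setIntegral (hX : Measurable X) (hX0 : ∀ᵐ ω ∂μ, 0 ≤ X ω)
    {s : ℝ} (hs0 : 0 < s) (hs1 : s ≤ 1) (n : ℕ) :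
    ∫ ω, s ^ X ω ∂μ = ∑ k ∈ Finset.range n, μ.real {ω | X ω = k} * s ^ k
      + ∫ ω in avoidsRange X n, s ^ X ω ∂μ := by
  induction n with
  | zero => simp [avoidsRange_zero]
  | succ n ih =>
    have hXn : MeasurableSet {ω | X ω = n} := hX (measurableSet_singleton _)
    have hsplit := integral_inter_add_sdiff hXn
      (integrable_rpow_of_nonneg hX hX0 hs0.le hs1).integrableOn (μ := μ) (s := avoidsRange X n)
    have hatom : ∫ ω in {ω | X ω = n}, s ^ X ω ∂μ = μ.real {ω | X ω = n} * s ^ n := by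
      rw [setIntegral_congr_fun hXn (g := fun _ ↦ s ^ n) fun ω (hω : X ω = n) ↦ by
        rw [hω, Real.rpow_natCast], setIntegral_const, smul_eq_mul]
    rw [inter_eq_right.2 (setOf_eq_subset_avoidsRange n), ← avoidsRange_succ, hatom] at hsplit
    rw [ih, ← hsplit, Finset.sum_range_succ, add_assoc]

lemma tendsto_setIntegral_div_rpow_of_isLittleO (hX : Measurable X) (hX0 : ∀ᵐ ω ∂μ, 0 ≤ X ω)
    {p : ℕ → ℝ} {n : ℕ}
    (hexp : (fun s : ℝ ↦ (∫ ω, s ^ X ω ∂μ) - ∑ k ∈ Finset.range (n + 1), p k * s ^ k)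
      =o[𝓝[>] 0] fun s ↦ s ^ n)
    (hp : ∀ k < n, μ.real {ω | X ω = k} = p k) :
    Tendsto (fun s : ℝ ↦ (∫ ω in avoidsRange X n, s ^ X ω ∂μ) / s ^ (n : ℝ)) (𝓝[>] 0)
      (𝓝 (p n)) := by
  have h := hexp.tendsto_div_nhds_zero.add_const (p n)
  rw [zero_add] at h
  refine h.congr' ?_
  filter_upwards [Ioc_mem_nhdsGT one_pos] with s ⟨hs0, hs1⟩
  have hsum : ∑ k ∈ Finset.range n, μ.real {ω | X ω = k} * s ^ k
      = ∑ k ∈ Finset.range n, p k * s ^ k :=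
    Finset.sum_congr rfl fun k hk ↦ by rw [hp k (Finset.mem_range.1 hk)]
  rw [integral_rpow_eq_sum_add_setIntegral hX hX0 hs0 hs1 n, hsum, Finset.sum_range_succ,
    Real.rpow_natCast]
  field_simp
  ring

lemma ae_le_and_measureReal_eq (hX : Measurable X) (hX0 : ∀ᵐ ω ∂μ, 0 ≤ X ω) {p : ℕ → ℝ}
    (hexp : ∀ n : ℕ,
      (fun s : ℝ ↦ (∫ ω, s ^ X ω ∂μ) - ∑ k ∈ Finset.range (n + 1), p k * s ^ k)
        =o[𝓝[>] 0] fun s ↦ s ^ n) (n : ℕ) :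
    (∀ᵐ ω ∂μ.restrict (avoidsRange X n), (n : ℝ) ≤ X ω) ∧
      ∀ k < n, μ.real {ω | X ω = k} = p k := by
  induction n with
  | zero => exact ⟨by simpa using ae_restrict_of_ae hX0, nofun⟩
  | succ n ih =>
    obtain ⟨hle, hp⟩ := ih
    have hatom : μ.real {ω | X ω = n} = p n := by
      have h := tendsto_integral_rpow_div_rpow hX hle
      have hXn : MeasurableSet {ω | X ω = n} := hX (measurableSet_singleton _)
      rw [measureReal_restrict_apply hXn,
        inter_eq_left.2 (setOf_eq_subset_avoidsRange n)] at h
      exact tendsto_nhds_unique h (tendsto_setIntegral_div_rpow_of_isLittleO hX hX0 (hexp n) hp)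
    have hp' : ∀ k < n + 1, μ.real {ω | X ω = k} = p k := by
      simpa only [Nat.forall_lt_succ_right] using ⟨hp, hatom⟩
    exact ⟨ae_le_of_tendsto_integral_rpow_div_rpow hX (ae_restrict_of_ae hX0)
      (tendsto_setIntegral_div_rpow_of_isLittleO hX hX0 (hexp (n + 1)) hp'), hp'⟩

end Expansion

/-- **Recovering a probability generating function** (Lemma 3 of the paper): if `X ≥ 0`
is a random variable whose generating function `g(s) = E[s^X]` admits, for every `n`, the
expansion `g(s) = ∑_{k=0}^n p_k s^k + o(s^n)` as `s → 0+`, then `X` takes values in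
`ℕ₀ = {0,1,2,…}` a.s., each `p_k` is nonnegative, and `P(X = k) = p_k` for all `k`. -/
theorem generating_function_expansion
    {Ω : Type*} [mΩ : MeasurableSpace Ω] {P : Measure Ω} [IsProbabilityMeasure P]
    {X : Ω → ℝ} (hXm : Measurable X) (hX0 : ∀ᵐ ω ∂P, 0 ≤ X ω)
    (p : ℕ → ℝ)
    (hexp : ∀ n : ℕ,
      (fun s : ℝ => (∫ ω, s ^ X ω ∂P) - ∑ k ∈ Finset.range (n + 1), p k * s ^ k)
        =o[nhdsWithin 0 (Set.Ioi 0)] fun s => s ^ n) :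
    (∀ᵐ ω ∂P, ∃ k : ℕ, X ω = k) ∧
    ∀ k : ℕ, 0 ≤ p k ∧ (P {ω | X ω = (k : ℝ)}).toReal = p k := by
  have key := ae_le_and_measureReal_eq hXm hX0 hexp
  refine ⟨?_, fun k ↦ ?_⟩
  · have hle : ∀ᵐ ω ∂P, ∀ n : ℕ, ω ∈ avoidsRange X n → (n : ℝ) ≤ X ω :=
      ae_all_iff.2 fun n ↦ (ae_restrict_iff' (measurableSet_avoidsRange hXm n)).1 (key n).1
    filter_upwards [hle] with ω hω
    by_contra! hne
    have := hω (⌊X ω⌋₊ + 1) fun k _ ↦ hne k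
    push_cast at this
    linarith [Nat.lt_floor_add_one (X ω)]
  · have hk := (key (k + 1)).2 k k.lt_succ_self
    exact ⟨hk ▸ measureReal_nonneg, hk⟩
end

section
/- Let X be a nonnegative real-valued random variable and let n ≥ 1 be an integer. If sup_{s∈(0,1]} E[1_{X ∈ (n−1, n)} · s^{X−n}] < ∞, then P(X ∈ (n−1, n)) = 0. -/
open MeasureTheory ProbabilityTheory Filter Set
open scoped ENNReal NNReal Topology

noncomputable section

/-! On the slab `{a < X ≤ b - δ}` the integrand `s ^ (X - b)` is at least `s ^ (-δ)`, which tends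
to `∞` as `s → 0⁺`; a uniform bound on the integrals therefore forces every such slab to be null,
and the gap `{a < X < b}` is the countable union of the slabs with `δ = 1 / (k + 1)`. -/

lemma eq_zero_of_forall_mul_rpow_neg_le {a C δ : ℝ} (ha : 0 ≤ a) (hδ : 0 < δ)
    (h : ∀ s ∈ Ioc (0 : ℝ) 1, s ^ (-δ) * a ≤ C) : a = 0 := by
  by_contra ha0
  have htend : Tendsto (fun s : ℝ ↦ s ^ (-δ) * a) (𝓝[>] 0) atTop :=
    (tendsto_rpow_neg_nhdsGT_zero (neg_neg_of_pos hδ)).atTop_mul_const (ha.lt_of_ne' ha0)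
  have hle : ∀ᶠ s in 𝓝[>] (0 : ℝ), s ^ (-δ) * a ≤ C := by
    filter_upwards [Ioc_mem_nhdsGT zero_lt_one] with s hs using h s hs
  obtain ⟨s, hsC, hCs⟩ := (hle.and (htend.eventually_gt_atTop C)).exists
  linarith

section

variable {Ω : Type*} [MeasurableSpace Ω] {μ : Measure Ω}

lemma measure_preimage_Ioo_eq_zero_of_forall_Ioc {X : Ω → ℝ} {a b : ℝ}
    (h : ∀ δ > 0, μ (X ⁻¹' Ioc a (b - δ)) = 0) : μ (X ⁻¹' Ioo a b) = 0 := by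
  refine measure_mono_null (fun ω hω ↦ ?_)
    (measure_iUnion_null fun k : ℕ ↦ h (1 / (k + 1)) Nat.one_div_pos_of_nat)
  obtain ⟨k, hk⟩ := exists_nat_one_div_lt (sub_pos.2 hω.2)
  exact mem_iUnion.2 ⟨k, hω.1, by linarith⟩

lemma integrableOn_rpow_of_le_one {f : Ω → ℝ} {A : Set Ω} {s c : ℝ} (hs0 : 0 < s) (hs1 : s ≤ 1)
    (hf : Measurable f) (hA : MeasurableSet A) (hμA : μ A ≠ ∞) (hfA : ∀ ω ∈ A, c ≤ f ω) :
    IntegrableOn (fun ω ↦ s ^ f ω) A μ := by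
  refine Measure.integrableOn_of_bounded hμA (measurable_const.pow hf).aestronglyMeasurable
    (M := s ^ c) ((ae_restrict_iff' hA).2 (ae_of_all _ fun ω hω ↦ ?_))
  rw [Real.norm_of_nonneg (Real.rpow_nonneg hs0.le _)]
  exact Real.rpow_le_rpow_of_exponent_ge hs0 hs1 (hfA ω hω)

lemma measure_preimage_Ioo_eq_zero_of_setIntegral_rpow_le [IsFiniteMeasure μ] {X : Ω → ℝ}
    (hX : Measurable X) {a b C : ℝ}
    (hC : ∀ s ∈ Ioc (0 : ℝ) 1, ∫ ω in X ⁻¹' Ioo a b, s ^ (X ω - b) ∂μ ≤ C) :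
    μ (X ⁻¹' Ioo a b) = 0 := by
  refine measure_preimage_Ioo_eq_zero_of_forall_Ioc fun δ hδ ↦ ?_
  have hslab : X ⁻¹' Ioc a (b - δ) ⊆ X ⁻¹' Ioo a b := fun ω hω ↦ ⟨hω.1, by linarith [hω.2]⟩
  refine (measureReal_eq_zero_iff (measure_ne_top _ _)).1
    (eq_zero_of_forall_mul_rpow_neg_le (C := C) measureReal_nonneg hδ fun s hs ↦ ?_)
  have hint : IntegrableOn (fun ω ↦ s ^ (X ω - b)) (X ⁻¹' Ioo a b) μ :=
    integrableOn_rpow_of_le_one (c := a - b) hs.1 hs.2 (hX.sub_const b) (hX measurableSet_Ioo)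
      (measure_ne_top _ _) fun ω hω ↦ by linarith [hω.1]
  calc s ^ (-δ) * μ.real (X ⁻¹' Ioc a (b - δ))
    _ ≤ ∫ ω in X ⁻¹' Ioc a (b - δ), s ^ (X ω - b) ∂μ :=
      setIntegral_ge_of_const_le_real (hX measurableSet_Ioc) (measure_ne_top _ _)
        (fun ω hω ↦ Real.rpow_le_rpow_of_exponent_ge hs.1 hs.2 (by linarith [hω.2]))
        (hint.mono_set hslab)
    _ ≤ ∫ ω in X ⁻¹' Ioo a b, s ^ (X ω - b) ∂μ :=
      setIntegral_mono_set hint (ae_of_all _ fun ω ↦ Real.rpow_nonneg hs.1.le _)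
        hslab.eventuallyLE
    _ ≤ C := hC s hs

end

theorem no_mass_in_gap_general
    {Ω : Type*} [mΩ : MeasurableSpace Ω] {P : Measure Ω} [IsProbabilityMeasure P]
    {X : Ω → ℝ} (hXm : Measurable X)
    {n : ℕ}
    (hbdd : ∃ C : ℝ, ∀ s ∈ Set.Ioc (0 : ℝ) 1,
      (∫ ω in {ω | (n : ℝ) - 1 < X ω ∧ X ω < n}, s ^ (X ω - n) ∂P) ≤ C) :
    P {ω | (n : ℝ) - 1 < X ω ∧ X ω < n} = 0 := by
  obtain ⟨C, hC⟩ := hbdd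
  exact measure_preimage_Ioo_eq_zero_of_setIntegral_rpow_le hXm hC

/-- For a nonnegative random variable `X` and integer `n ≥ 1`, if
`sup_{s ∈ (0,1]} E[1_{X ∈ (n−1,n)} ⬝ s^{X−n}] < ∞`, then `P(X ∈ (n−1,n)) = 0`. -/
theorem no_mass_in_gap
    {Ω : Type*} [mΩ : MeasurableSpace Ω] {P : Measure Ω} [IsProbabilityMeasure P]
    {X : Ω → ℝ} (hXm : Measurable X) (hX0 : ∀ᵐ ω ∂P, 0 ≤ X ω)
    {n : ℕ} (hn : 1 ≤ n)
    (hbdd : ∃ C : ℝ, ∀ s ∈ Set.Ioc (0 : ℝ) 1,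
      (∫ ω in {ω | (n : ℝ) - 1 < X ω ∧ X ω < n}, s ^ (X ω - n) ∂P) ≤ C) :
    P {ω | (n : ℝ) - 1 < X ω ∧ X ω < n} = 0 :=
  no_mass_in_gap_general (mΩ := mΩ) hXm hbdd

end
end
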